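/- For F ∈ GL⁺(n,ℝ) with polar decomposition F = R·U, the Euclidean distance satisfies dist²_euclid(F, SO(n)) = ‖U − Id‖² = Σᵢ (λᵢ − 1)², where λᵢ > 0 are the eigenvalues (singular values of F) of U. -/

import Mathlib

open Matrix

noncomputable def frobSq {n : ℕ} (X : Matrix (Fin n) (Fin n) ℝ) : ℝ :=
  Matrix.trace (Xᵀ * X)

noncomputable def symPart {n : ℕ} (X : Matrix (Fin n) (Fin n) ℝ) : Matrix (Fin n) (Fin n) ℝ :=
  (1 / 2 : ℝ) • (X + Xᵀ)

noncomputable def skewPart {n : ℕ} (X : Matrix (Fin n) (Fin n) ℝ) : Matrix (Fin n) (Fin n) ℝ :=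
  (1 / 2 : ℝ) • (X - Xᵀ)

noncomputable def devPart {n : ℕ} (X : Matrix (Fin n) (Fin n) ℝ) : Matrix (Fin n) (Fin n) ℝ :=
  X - (Matrix.trace X / (n : ℝ)) • (1 : Matrix (Fin n) (Fin n) ℝ)

def SOn (n : ℕ) : Set (Matrix (Fin n) (Fin n) ℝ) :=
  {Q | Qᵀ * Q = 1 ∧ Q.det = 1}

/-!
As `R` is orthogonal, `‖RU - Q‖ = ‖U - RᵀQ‖`, so it suffices to show `‖U - 1‖ ≤ ‖U - S‖` for every
orthogonal `S`. Expanding both squares, this is `tr (SᵀU) ≤ tr U`, which for `U = BᵀB` is the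
inequality `0 ≤ ‖B - BSᵀ‖² = 2 tr U - 2 tr (SU)`. The eigenvalue formula is the orthogonal
invariance of the Frobenius norm applied to the spectral decomposition `U - 1 = V (D - 1) Vᵀ`.
-/

section Frobenius

variable {n : ℕ}

lemma frobSq_nonneg (X : Matrix (Fin n) (Fin n) ℝ) : 0 ≤ frobSq X :=
  (posSemidef_conjTranspose_mul_self X).trace_nonneg

lemma frobSq_sub (A B : Matrix (Fin n) (Fin n) ℝ) :
    frobSq (A - B) = frobSq A - 2 * trace (Bᵀ * A) + frobSq B := by
  have h : trace (Aᵀ * B) = trace (Bᵀ * A) := by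
    rw [← trace_transpose, transpose_mul, transpose_transpose]
  simp only [frobSq, transpose_sub, sub_mul, mul_sub, trace_sub, h]
  ring

lemma frobSq_of_orthogonal {Q : Matrix (Fin n) (Fin n) ℝ} (hQ : Qᵀ * Q = 1) :
    frobSq Q = n := by
  simp [frobSq, hQ]

lemma frobSq_mul_left_of_orthogonal {Q : Matrix (Fin n) (Fin n) ℝ} (hQ : Qᵀ * Q = 1)
    (X : Matrix (Fin n) (Fin n) ℝ) : frobSq (Q * X) = frobSq X := by
  rw [frobSq, transpose_mul, Matrix.mul_assoc, ← Matrix.mul_assoc Qᵀ, hQ, Matrix.one_mul, frobSq]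

lemma frobSq_mul_transpose_right_of_orthogonal {Q : Matrix (Fin n) (Fin n) ℝ} (hQ : Qᵀ * Q = 1)
    (X : Matrix (Fin n) (Fin n) ℝ) : frobSq (X * Qᵀ) = frobSq X := by
  rw [frobSq, transpose_mul, transpose_transpose, Matrix.mul_assoc, trace_mul_comm,
    Matrix.mul_assoc, Matrix.mul_assoc X, hQ, Matrix.mul_one, frobSq]

lemma frobSq_diagonal (d : Fin n → ℝ) : frobSq (diagonal d) = ∑ i, d i ^ 2 := by
  simp [frobSq, sq]

open scoped MatrixOrder in
lemma trace_mul_le_trace_of_posSemidef {S U : Matrix (Fin n) (Fin n) ℝ}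
    (hS : Sᵀ * S = 1) (hU : U.PosSemidef) : trace (S * U) ≤ trace U := by
  obtain ⟨B, rfl⟩ := CStarAlgebra.nonneg_iff_eq_star_mul_self.mp hU.nonneg
  rw [star_eq_conjTranspose, conjTranspose_eq_transpose_of_trivial]
  have h := frobSq_nonneg (B - B * Sᵀ)
  rw [frobSq_sub, frobSq_mul_transpose_right_of_orthogonal hS, transpose_mul, transpose_transpose,
    Matrix.mul_assoc, trace_mul_comm] at h
  simp only [frobSq] at h
  rw [trace_mul_comm]
  linarith

lemma frobSq_sub_one_le_frobSq_sub {S U : Matrix (Fin n) (Fin n) ℝ}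
    (hS : Sᵀ * S = 1) (hU : U.PosSemidef) : frobSq (U - 1) ≤ frobSq (U - S) := by
  have hSt : Sᵀᵀ * Sᵀ = 1 := by rw [transpose_transpose]; exact mul_eq_one_comm.mp hS
  have := trace_mul_le_trace_of_posSemidef hSt hU
  rw [frobSq_sub, frobSq_sub, frobSq_of_orthogonal hS,
    frobSq_of_orthogonal (Q := 1) (by simp), transpose_one, Matrix.one_mul]
  linarith

lemma Matrix.IsHermitian.frobSq_sub_one_eq_sum_sq {U : Matrix (Fin n) (Fin n) ℝ}
    (hU : U.IsHermitian) : frobSq (U - 1) = ∑ i, (hU.eigenvalues i - 1) ^ 2 := by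
  set V : Matrix (Fin n) (Fin n) ℝ := (hU.eigenvectorUnitary : Matrix (Fin n) (Fin n) ℝ)
  have hV : Vᵀ * V = 1 := by
    simpa [star_eq_conjTranspose] using (mem_unitaryGroup_iff'.mp hU.eigenvectorUnitary.2)
  have hspec : U - 1 = V * diagonal (fun i ↦ hU.eigenvalues i - 1) * Vᵀ := by
    have h := hU.spectral_theorem
    simp only [Unitary.conjStarAlgAut_apply, star_eq_conjTranspose,
      conjTranspose_eq_transpose_of_trivial, RCLike.ofReal_real_eq_id, Function.id_comp] at h
    rw [← diagonal_sub hU.eigenvalues (fun _ ↦ 1), diagonal_one, Matrix.mul_sub, Matrix.sub_mul,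
      Matrix.mul_one, mul_eq_one_comm.mp hV, ← h]
  rw [hspec, frobSq_mul_transpose_right_of_orthogonal hV, frobSq_mul_left_of_orthogonal hV,
    frobSq_diagonal]

end Frobenius

theorem stmt15_general (n : ℕ) (F R U : Matrix (Fin n) (Fin n) ℝ)
    (hR : R ∈ SOn n)
    (hUherm : U.IsHermitian) (hUpos : U.PosDef)
    (hpolar : F = R * U) :
    IsLeast {v : ℝ | ∃ Q ∈ SOn n, v = frobSq (F - Q)} (frobSq (U - 1)) ∧
    frobSq (U - 1) = ∑ i : Fin n, (hUherm.eigenvalues i - 1) ^ 2 := by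
  have hRRt : R * Rᵀ = 1 := mul_eq_one_comm.mp hR.1
  have hdist (Q : Matrix (Fin n) (Fin n) ℝ) : frobSq (F - Q) = frobSq (U - Rᵀ * Q) := by
    rw [hpolar, ← frobSq_mul_left_of_orthogonal hR.1 (U - Rᵀ * Q), Matrix.mul_sub,
      ← Matrix.mul_assoc, hRRt, Matrix.one_mul]
  refine ⟨⟨⟨R, hR, by rw [hdist, hR.1]⟩, ?_⟩, hUherm.frobSq_sub_one_eq_sum_sq⟩
  rintro _ ⟨Q, hQ, rfl⟩
  have hRtQ : (Rᵀ * Q)ᵀ * (Rᵀ * Q) = 1 := by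
    rw [transpose_mul, transpose_transpose, Matrix.mul_assoc, ← Matrix.mul_assoc R, hRRt,
      Matrix.one_mul, hQ.1]
  rw [hdist]
  exact frobSq_sub_one_le_frobSq_sub hRtQ hUpos.posSemidef

/-- dist²_euclid(F, SO(n)) = ‖U − 1‖² = Σᵢ (λᵢ − 1)² where λᵢ are the eigenvalues of U. -/
theorem stmt15 (n : ℕ) (F R U : Matrix (Fin n) (Fin n) ℝ)
    (hF : 0 < F.det) (hR : R ∈ SOn n)
    (hUherm : U.IsHermitian) (hUpos : U.PosDef) (hUsq : U * U = Fᵀ * F)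
    (hpolar : F = R * U) :
    IsLeast {v : ℝ | ∃ Q ∈ SOn n, v = frobSq (F - Q)} (frobSq (U - 1)) ∧
    frobSq (U - 1) = ∑ i : Fin n, (hUherm.eigenvalues i - 1) ^ 2 :=
  stmt15_general n F R U hR hUherm hUpos hpolar
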